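/- arXiv:2402.03016 — 5 statements merged into one kernel-verified Lean document; each statement's English description precedes it below -/
import Mathlib

section
/- Let P, Q ∈ ℂ[x] satisfy P P* + (1-x²) Q Q* = 1, with φ ∈ ℝ such that e^{2iφ} = p_l/q_{l-1}. Define P̃, Q̃ as P̃(x) = e^{-iφ}(xP(x) + e^{2iφ}(1-x²)Q(x)), Q̃(x) = e^{-iφ}(-P(x) + e^{2iφ}xQ(x)). Then for all x ∈ [-1,1], the matrix [[P̃(x), iQ̃(x)√(1-x²)],[iQ̃*(x)√(1-x²), P̃*(x)]] · W_x(arccos x) · S_z(φ) equals [[P(x), iQ(x)√(1-x²)],[iQ*(x)√(1-x²), P*(x)]]. -/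
open Polynomial Complex Matrix

theorem carving_matrix_identity (P Q : Polynomial ℂ) (l : ℕ) (hl : 0 < l)
    (hP : P.natDegree = l) (hQ : Q.natDegree = l - 1)
    (hid : P * P.map (starRingEnd ℂ) + (1 - X ^ 2) * (Q * Q.map (starRingEnd ℂ)) = 1)
    (φ : ℝ) (hφ : Complex.exp (2 * φ * I) = P.coeff l / Q.coeff (l - 1)) :
    ∀ x : ℝ, x ∈ Set.Icc (-1 : ℝ) 1 →
      letI Pt : Polynomial ℂ :=
        C (Complex.exp (-(φ * I))) * (X * P + C (Complex.exp (2 * φ * I)) * ((1 - X ^ 2) * Q))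
      letI Qt : Polynomial ℂ :=
        C (Complex.exp (-(φ * I))) * (-P + C (Complex.exp (2 * φ * I)) * (X * Q))
      (!![Pt.eval (x : ℂ), I * Qt.eval (x : ℂ) * Real.sqrt (1 - x ^ 2);
          I * (Qt.map (starRingEnd ℂ)).eval (x : ℂ) * Real.sqrt (1 - x ^ 2),
          (Pt.map (starRingEnd ℂ)).eval (x : ℂ)] *
        !![(x : ℂ), I * Real.sqrt (1 - x ^ 2); I * Real.sqrt (1 - x ^ 2), (x : ℂ)] *
        !![Complex.exp (I * φ), 0; 0, Complex.exp (-(I * φ))]) =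
      !![P.eval (x : ℂ), I * Q.eval (x : ℂ) * Real.sqrt (1 - x ^ 2);
         I * (Q.map (starRingEnd ℂ)).eval (x : ℂ) * Real.sqrt (1 - x ^ 2),
         (P.map (starRingEnd ℂ)).eval (x : ℂ)] := by
  intro x hx
  obtain ⟨hx1, hx2⟩ := hx
  set a := Complex.exp (-(φ * I)) with ha
  set b := Complex.exp ((φ : ℂ) * I) with hb
  have hab : a * b = 1 := by
    rw [ha, hb, ← Complex.exp_add]; simp
  have h2 : Complex.exp (2 * φ * I) = b * b := by
    rw [hb, ← Complex.exp_add]; ring_nf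
  have hIb : Complex.exp (I * φ) = b := by rw [hb, mul_comm]
  have hIa : Complex.exp (-(I * φ)) = a := by rw [ha, mul_comm]
  have hca : (starRingEnd ℂ) a = b := by
    rw [ha, hb, ← Complex.exp_conj]
    congr 1
    simp [Complex.conj_I]
  have hcb : (starRingEnd ℂ) b = a := by
    rw [ha, hb, ← Complex.exp_conj]
    congr 1
    simp [Complex.conj_I]
  have h0 : (0 : ℝ) ≤ 1 - x ^ 2 := by nlinarith
  have hs : ((Real.sqrt (1 - x ^ 2) : ℝ) : ℂ) * ((Real.sqrt (1 - x ^ 2) : ℝ) : ℂ)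
      = 1 - (x : ℂ) ^ 2 := by
    rw [← Complex.ofReal_mul, Real.mul_self_sqrt h0]
    push_cast
    ring
  set s : ℂ := ((Real.sqrt (1 - x ^ 2) : ℝ) : ℂ) with hsdef
  set p : ℂ := P.eval (x : ℂ) with hp
  set q : ℂ := Q.eval (x : ℂ) with hq
  set p' : ℂ := (P.map (starRingEnd ℂ)).eval (x : ℂ) with hp'
  set q' : ℂ := (Q.map (starRingEnd ℂ)).eval (x : ℂ) with hq'
  ext i j
  fin_cases i <;> fin_cases j <;>
    simp only [h2, hIb, hIa, Polynomial.map_mul, Polynomial.map_add, Polynomial.map_neg,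
      Polynomial.map_sub, Polynomial.map_one, Polynomial.map_pow, Polynomial.map_X,
      Polynomial.map_C, hca, _root_.map_mul, hcb, Polynomial.eval_mul, Polynomial.eval_add,
      Polynomial.eval_neg, Polynomial.eval_sub, Polynomial.eval_one, Polynomial.eval_pow,
      Polynomial.eval_X, Polynomial.eval_C, Matrix.mul_apply, Fin.sum_univ_two, Matrix.of_apply,
      Matrix.cons_val', Matrix.cons_val_zero, Matrix.cons_val_one, Matrix.head_cons,
      Matrix.head_fin_const, Matrix.empty_val', Matrix.cons_val_fin_one, Fin.isValue,
      Fin.mk_zero, Fin.mk_one]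
  · linear_combination p * hab + (a * b * p - a * b ^ 3 * x * q) * hs +
      s * s * (-(a * b * p) + a * b ^ 3 * x * q) * Complex.I_mul_I
  · linear_combination I * s * q * (a * b + 1) * hab
  · linear_combination I * s * q' * (a * b + 1) * hab
  · linear_combination p' * hab + (a * b * p' - a ^ 3 * b * x * q') * hs +
      s * s * (-(a * b * p') + a ^ 3 * b * x * q') * Complex.I_mul_I
end

section
/- Let f ∈ ℝ[w,w⁻¹] with |f(w)| ≤ 1 for all w on the unit circle, and A(w) := 1 - f(w)f(1/w). Then A(w) ≥ 0 (is real and nonnegative) for all w ∈ U(1), and every root of w^{2l}A(w) lying on the unit circle has even multiplicity. -/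
/-!
On the unit circle `w⁻¹ = conj w`, and `f` has real coefficients, so `A(w) = 1 - |f(w)|² ≥ 0`.
For a root `s` of `p` on the circle, move along the circle `t ↦ s e^{it}`: the root of
multiplicity `m` gives `p(s e^{it}) = t^m h(t)` with `h` continuous and `h(0) ≠ 0`. Since
`w^{-2l} p(w) = A(w) ≥ 0`, this product stays nonnegative as `t` crosses `0`, which
forces `t^m` not to change sign, i.e. `m` even.
-/

/-- Evaluation of a real-coefficient Laurent polynomial at a complex number. -/
noncomputable def levalR (c : ℤ →₀ ℝ) (w : ℂ) : ℂ :=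
  ∑ k ∈ c.support, (c k : ℂ) * w ^ k

open Complex Polynomial Filter Topology Set
open scoped ComplexOrder ComplexConjugate

theorem even_of_eventually_nonneg_pow_mul {m : ℕ} {h : ℝ → ℂ} (hc : ContinuousAt h 0)
    (h0 : h 0 ≠ 0) (hnn : ∀ᶠ t in 𝓝 (0 : ℝ), 0 ≤ ((t : ℝ) : ℂ) ^ m * h t) :
    Even m := by
  by_contra hodd
  rw [Nat.not_even_iff_odd] at hodd
  have hdiv : ∀ t : ℝ, t ≠ 0 →
      h t = (((t ^ m)⁻¹ : ℝ) : ℂ) * ((t : ℂ) ^ m * h t) := by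
    intro t ht
    push_cast
    rw [inv_mul_cancel_left₀ (pow_ne_zero m (ofReal_ne_zero.2 ht))]
  have hright : 0 ≤ h 0 := by
    refine ge_of_tendsto (hc.tendsto.mono_left (nhdsWithin_le_nhds (s := Ioi 0))) ?_
    filter_upwards [nhdsWithin_le_nhds hnn, self_mem_nhdsWithin] with t ht (htpos : 0 < t)
    rw [hdiv t htpos.ne']
    exact mul_nonneg (zero_le_real.2 (by positivity)) ht
  have hleft : h 0 ≤ 0 := by
    refine le_of_tendsto (hc.tendsto.mono_left (nhdsWithin_le_nhds (s := Iio 0))) ?_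
    filter_upwards [nhdsWithin_le_nhds hnn, self_mem_nhdsWithin] with t ht (htneg : t < 0)
    rw [hdiv t htneg.ne, ← neg_nonneg, ← neg_mul, ← ofReal_neg]
    exact mul_nonneg (zero_le_real.2 (neg_nonneg.2 (inv_nonpos.2 (hodd.pow_neg htneg).le))) ht
  exact h0 (le_antisymm hleft hright)

theorem even_rootMultiplicity_of_eventually_nonneg {p : ℂ[X]} (hp : p ≠ 0)
    {γ : ℝ → ℂ} {γ' : ℂ} (hγ : HasDerivAt γ γ' 0) (hγ' : γ' ≠ 0)
    {u : ℝ → ℂ} (hu : ContinuousAt u 0) (hu0 : u 0 ≠ 0)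
    (hnn : ∀ᶠ t in 𝓝 (0 : ℝ), 0 ≤ u t * p.eval (γ t)) :
    Even (p.rootMultiplicity (γ 0)) := by
  set m := p.rootMultiplicity (γ 0)
  set q := p /ₘ (X - C (γ 0)) ^ m
  have hfac : ∀ t,
      u t * p.eval (γ t) = (t : ℂ) ^ m * (dslope γ 0 t ^ m * q.eval (γ t) * u t) := by
    intro t
    have hsub : γ t - γ 0 = t * dslope γ 0 t := by
      simpa [Complex.real_smul] using (sub_smul_dslope γ 0 t).symm
    conv_lhs => rw [← pow_mul_divByMonic_rootMultiplicity_eq p (γ 0)]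
    simp only [eval_mul, eval_pow, eval_sub, eval_X, eval_C, hsub]
    ring
  refine even_of_eventually_nonneg_pow_mul (h := fun t => dslope γ 0 t ^ m * q.eval (γ t) * u t)
    ?_ ?_ (by simpa only [hfac] using hnn)
  · exact ((continuousAt_dslope_same.2 hγ.differentiableAt).pow m).mul
      (q.continuousAt.comp hγ.continuousAt) |>.mul hu
  · rw [dslope_same, hγ.deriv]
    exact mul_ne_zero (mul_ne_zero (pow_ne_zero m hγ')
      (eval_divByMonic_pow_rootMultiplicity_ne_zero _ hp)) hu0

theorem levalR_conj (c : ℤ →₀ ℝ) (w : ℂ) : levalR c (conj w) = conj (levalR c w) := by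
  simp only [levalR, map_sum, map_mul, conj_ofReal, map_zpow₀]

theorem one_sub_levalR_mul_levalR_inv_nonneg {c : ℤ →₀ ℝ}
    (hbound : ∀ w : ℂ, ‖w‖ = 1 → ‖levalR c w‖ ≤ 1) {w : ℂ} (hw : ‖w‖ = 1) :
    0 ≤ 1 - levalR c w * levalR c w⁻¹ := by
  rw [inv_eq_conj hw, levalR_conj, mul_conj, normSq_eq_norm_sq, ← ofReal_one, ← ofReal_sub,
    zero_le_real, sub_nonneg]
  exact pow_le_one₀ (norm_nonneg _) (hbound w hw)

theorem hasDerivAt_mul_exp_I_mul (s : ℂ) :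
    HasDerivAt (fun t : ℝ => s * exp (I * t)) (s * I) 0 := by
  simpa using ((ofRealCLM.hasDerivAt (x := (0 : ℝ))).const_mul I).cexp.const_mul s

theorem laurent_A_nonneg_and_even_mult_general (c : ℤ →₀ ℝ) (l : ℕ)
    (hbound : ∀ w : ℂ, ‖w‖ = 1 → ‖levalR c w‖ ≤ 1)
    (p : Polynomial ℂ) (hp : p ≠ 0)
    (hpe : ∀ w : ℂ, w ≠ 0 → p.eval w = w ^ (2 * l) * (1 - levalR c w * levalR c w⁻¹)) :
    (∀ w : ℂ, ‖w‖ = 1 →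
        (1 - levalR c w * levalR c w⁻¹).im = 0 ∧
        0 ≤ (1 - levalR c w * levalR c w⁻¹).re) ∧
    ∀ s : ℂ, ‖s‖ = 1 → Even (p.rootMultiplicity s) := by
  have hA : ∀ w : ℂ, ‖w‖ = 1 → 0 ≤ 1 - levalR c w * levalR c w⁻¹ :=
    fun _ => one_sub_levalR_mul_levalR_inv_nonneg hbound
  refine ⟨fun w hw => ?_, fun s hs => ?_⟩
  · obtain ⟨hre, him⟩ := nonneg_iff.1 (hA w hw)
    exact ⟨him.symm, hre⟩
  set γ : ℝ → ℂ := fun t => s * exp (I * t)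
  have hγ : ∀ t, ‖γ t‖ = 1 := by simp [γ, hs, norm_exp]
  have hγ0 : ∀ t, γ t ≠ 0 := fun t h => by simpa [h] using hγ t
  have hγs : γ 0 = s := by simp [γ]
  rw [← hγs]
  refine even_rootMultiplicity_of_eventually_nonneg hp (hasDerivAt_mul_exp_I_mul s)
    (mul_ne_zero (hγs ▸ hγ0 0) I_ne_zero) (u := fun t => (γ t ^ (2 * l))⁻¹) ?_
    (inv_ne_zero (pow_ne_zero _ (hγ0 0))) (Eventually.of_forall fun t => ?_)
  · exact ((hasDerivAt_mul_exp_I_mul s).continuousAt.pow _).inv₀ (pow_ne_zero _ (hγ0 0))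
  · rw [hpe _ (hγ0 t), inv_mul_cancel_left₀ (pow_ne_zero _ (hγ0 t))]
    exact hA _ (hγ t)

theorem laurent_A_nonneg_and_even_mult (c : ℤ →₀ ℝ) (l : ℕ)
    (hdeg : ∀ k ∈ c.support, |k| ≤ (l : ℤ))
    (hbound : ∀ w : ℂ, ‖w‖ = 1 → ‖levalR c w‖ ≤ 1)
    (p : Polynomial ℂ) (hp : p ≠ 0)
    (hpe : ∀ w : ℂ, w ≠ 0 → p.eval w = w ^ (2 * l) * (1 - levalR c w * levalR c w⁻¹)) :
    (∀ w : ℂ, ‖w‖ = 1 →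
        (1 - levalR c w * levalR c w⁻¹).im = 0 ∧
        0 ≤ (1 - levalR c w * levalR c w⁻¹).re) ∧
    ∀ s : ℂ, ‖s‖ = 1 → Even (p.rootMultiplicity s) :=
  laurent_A_nonneg_and_even_mult_general c l hbound p hp hpe
end

section
/- For s ∈ ℂ with Im(s) > 0 and x ∈ [-1,1], defining R₂(x;s) := (|s-1|+|s|)x² - |s| + i√((|s-1|+|s|)²-1)·x√(1-x²), we have R₂(x;s)·conj(R₂(x;s)) = (x² - s)(x² - s*), provided |s-1| + |s| ≥ 1. -/
/-! Both sides are squared moduli: the left one of a complex number with real part `a x² - |s|`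
and imaginary part `√(a² - 1) x √(1 - x²)`, the right one of `x² - s`. Expanding, the claim
reduces to `(a t - |s|)² + (a² - 1) t (1 - t) = |t - s|²` for `t = x²`, which holds because
`a - |s| = |s - 1|` and `|s - 1|² = |s|² - 2 Re s + 1`. -/

open Complex

namespace Complex

lemma one_le_norm_sub_one_add_norm (s : ℂ) : 1 ≤ ‖s - 1‖ + ‖s‖ := by
  simpa [add_comm] using norm_sub_le s (s - 1)

lemma normSq_ofReal_add_I_mul (p q : ℝ) : normSq (p + I * q) = p ^ 2 + q ^ 2 := by
  rw [mul_comm]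
  exact normSq_add_mul_I p q

lemma normSq_ofReal_sub (t : ℝ) (s : ℂ) : normSq (t - s) = t ^ 2 - 2 * t * s.re + ‖s‖ ^ 2 := by
  rw [Complex.sq_norm, normSq_apply, normSq_apply]
  simp only [sub_re, sub_im, ofReal_re, ofReal_im]
  ring

lemma norm_sub_one_sq (s : ℂ) : ‖s - 1‖ ^ 2 = ‖s‖ ^ 2 - 2 * s.re + 1 := by
  rw [norm_sub_rev, Complex.sq_norm, ← ofReal_one, normSq_ofReal_sub]
  ring

lemma sq_add_mul_eq_normSq_ofReal_sub (s : ℂ) (t : ℝ) :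
    ((‖s - 1‖ + ‖s‖) * t - ‖s‖) ^ 2 + ((‖s - 1‖ + ‖s‖) ^ 2 - 1) * t * (1 - t) =
      normSq (t - s) := by
  rw [normSq_ofReal_sub]
  linear_combination t * norm_sub_one_sq s

end Complex

theorem R2_norm_sq_general (s : ℂ) (x : ℝ) (hx : x ∈ Set.Icc (-1 : ℝ) 1) :
    letI a : ℝ := ‖s - 1‖ + ‖s‖
    ((a * x ^ 2 - ‖s‖ : ℝ) +
        I * Real.sqrt (a ^ 2 - 1) * x * Real.sqrt (1 - x ^ 2)) *
      (starRingEnd ℂ) ((a * x ^ 2 - ‖s‖ : ℝ) +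
        I * Real.sqrt (a ^ 2 - 1) * x * Real.sqrt (1 - x ^ 2)) =
    ((x : ℂ) ^ 2 - s) * ((x : ℂ) ^ 2 - (starRingEnd ℂ) s) := by
  have ha : 0 ≤ (‖s - 1‖ + ‖s‖) ^ 2 - 1 := by nlinarith [one_le_norm_sub_one_add_norm s]
  have hx2 : 0 ≤ 1 - x ^ 2 := by nlinarith [hx.1, hx.2]
  have hconj : (x : ℂ) ^ 2 - (starRingEnd ℂ) s = (starRingEnd ℂ) ((x : ℂ) ^ 2 - s) := by simp
  rw [hconj, mul_conj, mul_conj, mul_assoc I, mul_assoc I, ← ofReal_mul, ← ofReal_mul,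
    ← ofReal_pow, normSq_ofReal_add_I_mul, ← sq_add_mul_eq_normSq_ofReal_sub, mul_pow, mul_pow,
    Real.sq_sqrt ha, Real.sq_sqrt hx2]

theorem R2_norm_sq (s : ℂ) (hs : 0 < s.im) (x : ℝ) (hx : x ∈ Set.Icc (-1 : ℝ) 1)
    (ha : 1 ≤ ‖s - 1‖ + ‖s‖) :
    letI a : ℝ := ‖s - 1‖ + ‖s‖
    ((a * x ^ 2 - ‖s‖ : ℝ) +
        I * Real.sqrt (a ^ 2 - 1) * x * Real.sqrt (1 - x ^ 2)) *
      (starRingEnd ℂ) ((a * x ^ 2 - ‖s‖ : ℝ) +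
        I * Real.sqrt (a ^ 2 - 1) * x * Real.sqrt (1 - x ^ 2)) =
    ((x : ℂ) ^ 2 - s) * ((x : ℂ) ^ 2 - (starRingEnd ℂ) s) :=
  R2_norm_sq_general s x hx
end

section
/- Let F, G ∈ ℂ[w, w⁻¹] with nonnegative exponents only, satisfying F(w)conj(F)(1/w) + G(w)conj(G)(1/w) = 1, with highest exponent of F equal to d > 0, and let θ, φ ∈ ℝ satisfy (i·g_d)/f_d = e^{-iφ} tan θ where f_d, g_d are the coefficients of w^d in F and G. Define F̃(w) := (e^{-iφ} cos θ) w⁻¹ F(w) + (i sin θ) w⁻¹ G(w) and G̃(w) := (-i e^{-iφ} sin θ) F(w) + (-cos θ) G(w). Then F̃ and G̃ have all exponents in {0, ..., d-1}. -/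
open Polynomial Complex

theorem gqsp_carving_degree_reduction (F G : Polynomial ℂ) (d : ℕ) (hd : 0 < d)
    (hF : F.natDegree = d) (hG : G.natDegree ≤ d)
    (hid : ∀ w : ℂ, ‖w‖ = 1 → ‖F.eval w‖ ^ 2 + ‖G.eval w‖ ^ 2 = 1)
    (hf0 : F.coeff 0 ≠ 0)
    (horth : F.coeff d * (starRingEnd ℂ) (F.coeff 0) +
             G.coeff d * (starRingEnd ℂ) (G.coeff 0) = 0)
    (θ φ : ℝ)
    (hθφ : (I * G.coeff d) / F.coeff d = Complex.exp (-(φ * I)) * Real.tan θ) :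
    (∃ Ft : Polynomial ℂ, Ft.natDegree ≤ d - 1 ∧
        ∀ w : ℂ, w ≠ 0 →
          Ft.eval w = (Complex.exp (-(φ * I)) * Real.cos θ) * w⁻¹ * F.eval w +
            (I * Real.sin θ) * w⁻¹ * G.eval w) ∧
    (C (-I * Complex.exp (-(φ * I)) * Real.sin θ) * F +
        C (-(Real.cos θ : ℂ)) * G).natDegree ≤ d - 1 := by
  have hFne : F ≠ 0 := by
    intro h
    rw [h, natDegree_zero] at hF
    omega
  have hfd : F.coeff d ≠ 0 := by
    rw [← hF]
    exact mt leadingCoeff_eq_zero.mp hFne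
  set u : ℂ := Complex.exp (-(φ * I)) with hu_def
  have hu : u ≠ 0 := Complex.exp_ne_zero _
  have hconju : (starRingEnd ℂ) u = u⁻¹ := by
    rw [hu_def, ← Complex.exp_conj, ← Complex.exp_neg]
    congr 1
    simp [Complex.conj_ofReal]
  have hcos : Real.cos θ ≠ 0 := by
    intro h
    rw [Real.tan_eq_sin_div_cos, h, div_zero] at hθφ
    have hgd : G.coeff d = 0 := by
      have := hθφ
      field_simp at this
      simpa [Complex.I_ne_zero] using this
    rw [hgd, zero_mul, add_zero, mul_eq_zero] at horth
    rcases horth with h1 | h1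
    · exact hfd h1
    · exact hf0 (by simpa using h1)
  rw [Real.tan_eq_sin_div_cos, Complex.ofReal_div] at hθφ
  set cc : ℂ := (Real.cos θ : ℂ) with hcc_def
  set ss : ℂ := (Real.sin θ : ℂ) with hss_def
  have hcc : cc ≠ 0 := by
    rw [hcc_def]
    exact_mod_cast hcos
  have hkey : G.coeff d = -I * u * (ss / cc) * F.coeff d := by
    rw [div_eq_iff hfd] at hθφ
    linear_combination (-I) * hθφ + G.coeff d * Complex.I_mul_I
  have hcfd : (starRingEnd ℂ) (F.coeff d) ≠ 0 := by
    simpa using hfd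
  have hA : (starRingEnd ℂ) (F.coeff d) * F.coeff 0 +
      (starRingEnd ℂ) (G.coeff d) * G.coeff 0 = 0 := by
    have := congrArg (starRingEnd ℂ) horth
    simpa [map_add, map_mul] using this
  have hconjgd : (starRingEnd ℂ) (G.coeff d) =
      I * u⁻¹ * (ss / cc) * (starRingEnd ℂ) (F.coeff d) := by
    rw [hkey]
    simp only [map_mul, map_neg, Complex.conj_I, map_div₀, hss_def, hcc_def,
      Complex.conj_ofReal, hconju]
    ring
  have hf0eq : F.coeff 0 = -(I * u⁻¹ * (ss / cc)) * G.coeff 0 := by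
    apply mul_left_cancel₀ hcfd
    rw [hconjgd] at hA
    linear_combination hA
  -- constant coefficient of carved Ft vanishes
  have hc0 : u * cc * F.coeff 0 + I * ss * G.coeff 0 = 0 := by
    rw [hf0eq]
    linear_combination (-I * ss * G.coeff 0 * cc * cc⁻¹) * mul_inv_cancel₀ hu +
      (-I * ss * G.coeff 0) * mul_inv_cancel₀ hcc
  -- top coefficient of Gt vanishes
  have hgd0 : -I * u * ss * F.coeff d + -cc * G.coeff d = 0 := by
    rw [hkey]
    linear_combination (I * u * ss * F.coeff d) * mul_inv_cancel₀ hcc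
  constructor
  · -- Ft part
    set P : Polynomial ℂ := C (u * cc) * F + C (I * ss) * G with hP_def
    have hPdeg : P.natDegree ≤ d :=
      le_trans (natDegree_add_le _ _)
        (max_le ((natDegree_C_mul_le _ _).trans hF.le) ((natDegree_C_mul_le _ _).trans hG))
    have hP0 : P.coeff 0 = 0 := by
      simp only [hP_def, coeff_add, coeff_C_mul]
      exact hc0
    refine ⟨P.divX, ?_, ?_⟩
    · rw [natDegree_le_iff_coeff_eq_zero]
      intro N hN
      rw [coeff_divX]
      apply coeff_eq_zero_of_natDegree_lt
      omega
    · intro w hw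
      have hPe : P.divX.eval w * w = P.eval w := by
        have := congrArg (fun p => Polynomial.eval w p) (divX_mul_X_add P)
        simpa [hP0] using this
      have hPev : P.eval w = u * cc * F.eval w + I * ss * G.eval w := by
        simp [hP_def]
      have h2 : P.divX.eval w = (u * cc * F.eval w + I * ss * G.eval w) * w⁻¹ := by
        rw [← hPev, ← hPe, mul_assoc, mul_inv_cancel₀ hw, mul_one]
      rw [h2]
      ring
  · -- Gt part
    rw [natDegree_le_iff_coeff_eq_zero]
    intro N hN
    rcases eq_or_lt_of_le (show d ≤ N by omega) with rfl | hlt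
    · simp only [coeff_add, coeff_C_mul]
      linear_combination hgd0
    · simp only [coeff_add, coeff_C_mul]
      rw [coeff_eq_zero_of_natDegree_lt (by omega : F.natDegree < N),
        coeff_eq_zero_of_natDegree_lt (by omega : G.natDegree < N)]
      ring
end

section
/- For real Laurent polynomials F, G of degree at most 1 satisfying F(w)F(1/w) + G(w)G(1/w) = 1 on U(1) with F, G of equal (odd) parity, define θ_sum := arg(F(1) + iG(1)) and θ_diff := arg(F(i) - iG(i)) - π/2, and φ₀ := (θ_sum + θ_diff)/2, φ₁ := (θ_sum - θ_diff)/2. Then S_x(φ₀) W_z(θ) S_x(φ₁) = [[F(w), iG(w)], [iG(1/w), F(1/w)]] for all w = e^{iθ} ∈ U(1). -/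
/-!
Multiplying out, `S_x(φ₀) W_z(w) S_x(φ₁)` is a matrix of degree-one Laurent polynomials whose
coefficients are `± cos φ₀ cos φ₁`, `± sin φ₀ sin φ₁`, `cos φ₀ sin φ₁`, `sin φ₀ cos φ₁`; for
`φ₀, φ₁ = (α ± β)/2` the product-to-sum formulas turn these into `(cos α ± cos β)/2` and
`(sin α ± sin β)/2`. Unitarity at `w = 1` and `w = i` puts `F(1) + iG(1)` and `F(i) - iG(i)` on
the unit circle, which gives `cos θ_sum = f₋₁ + f₁`, `sin θ_sum = g₋₁ + g₁`,
`cos θ_diff = f₁ - f₋₁`, `sin θ_diff = g₋₁ - g₁`: exactly these sums and differences.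
-/

open Complex Matrix

noncomputable section

def sx (φ : ℝ) : Matrix (Fin 2) (Fin 2) ℂ :=
  !![(Real.cos φ : ℂ), I * Real.sin φ; I * Real.sin φ, (Real.cos φ : ℂ)]

def wz (w : ℂ) : Matrix (Fin 2) (Fin 2) ℂ := !![w, 0; 0, w⁻¹]

def laurentDegOne (a b : ℝ) (w : ℂ) : ℂ := a * w⁻¹ + b * w

def thetaSum (F G : ℂ → ℂ) : ℝ := arg (F 1 + I * G 1)

def thetaDiff (F G : ℂ → ℂ) : ℝ := arg (F I - I * G I) - Real.pi / 2

end

theorem laurentDegOne_one (a b : ℝ) : laurentDegOne a b 1 = ((a + b : ℝ) : ℂ) := by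
  simp [laurentDegOne]

theorem laurentDegOne_I (a b : ℝ) : laurentDegOne a b I = ((b - a : ℝ) : ℂ) * I := by
  simp only [laurentDegOne, inv_I]
  push_cast
  ring

theorem laurentDegOne_inv (a b : ℝ) (w : ℂ) : laurentDegOne a b w⁻¹ = laurentDegOne b a w := by
  simp only [laurentDegOne, inv_inv]
  ring

theorem laurentDegOne_mul_inv_one (a b : ℝ) :
    laurentDegOne a b 1 * laurentDegOne a b 1⁻¹ = ((a + b) ^ 2 : ℝ) := by
  rw [inv_one, laurentDegOne_one]
  push_cast
  ring

theorem laurentDegOne_mul_inv_I (a b : ℝ) :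
    laurentDegOne a b I * laurentDegOne a b I⁻¹ = ((b - a) ^ 2 : ℝ) := by
  rw [laurentDegOne_inv, laurentDegOne_I, laurentDegOne_I]
  push_cast
  linear_combination (-((b : ℂ) - a) ^ 2) * I_sq

theorem sx_mul_wz_mul_sx (φ₀ φ₁ : ℝ) (w : ℂ) :
    sx φ₀ * wz w * sx φ₁ =
      !![laurentDegOne (-(Real.sin φ₀ * Real.sin φ₁)) (Real.cos φ₀ * Real.cos φ₁) w,
        I * laurentDegOne (Real.sin φ₀ * Real.cos φ₁) (Real.cos φ₀ * Real.sin φ₁) w;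
        I * laurentDegOne (Real.sin φ₀ * Real.cos φ₁) (Real.cos φ₀ * Real.sin φ₁) w⁻¹,
        laurentDegOne (-(Real.sin φ₀ * Real.sin φ₁)) (Real.cos φ₀ * Real.cos φ₁) w⁻¹] := by
  simp only [sx, wz, laurentDegOne, mul_fin_two, inv_inv, ofReal_mul, ofReal_neg]
  ring_nf
  simp only [I_sq]
  ring_nf

theorem sx_add_mul_wz_mul_sx_sub (α β : ℝ) (w : ℂ) :
    sx ((α + β) / 2) * wz w * sx ((α - β) / 2) =
      !![laurentDegOne ((Real.cos α - Real.cos β) / 2) ((Real.cos α + Real.cos β) / 2) w,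
        I * laurentDegOne ((Real.sin α + Real.sin β) / 2) ((Real.sin α - Real.sin β) / 2) w;
        I * laurentDegOne ((Real.sin α + Real.sin β) / 2) ((Real.sin α - Real.sin β) / 2) w⁻¹,
        laurentDegOne ((Real.cos α - Real.cos β) / 2) ((Real.cos α + Real.cos β) / 2) w⁻¹] := by
  rw [sx_mul_wz_mul_sx, Real.cos_add_cos, Real.cos_sub_cos, Real.sin_add_sin, Real.sin_sub_sin]
  ring_nf

theorem cos_arg_and_sin_arg_of_sq_add_sq_eq_one {x y : ℝ} (h : x ^ 2 + y ^ 2 = 1) :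
    Real.cos (arg (x + y * I)) = x ∧ Real.sin (arg (x + y * I)) = y := by
  have hnorm : ‖(x : ℂ) + y * I‖ = 1 := by
    rw [norm_add_mul_I, h, Real.sqrt_one]
  have hne : (x : ℂ) + y * I ≠ 0 := by
    rintro h0
    simp [h0] at hnorm
  rw [cos_arg hne, sin_arg, hnorm]
  simp

section

variable {fm fp gm gp : ℝ}

theorem cos_thetaSum_and_sin_thetaSum
    (h : laurentDegOne fm fp 1 * laurentDegOne fm fp 1⁻¹ +
      laurentDegOne gm gp 1 * laurentDegOne gm gp 1⁻¹ = 1) :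
    Real.cos (thetaSum (laurentDegOne fm fp) (laurentDegOne gm gp)) = fm + fp ∧
      Real.sin (thetaSum (laurentDegOne fm fp) (laurentDegOne gm gp)) = gm + gp := by
  rw [laurentDegOne_mul_inv_one, laurentDegOne_mul_inv_one] at h
  have hz : laurentDegOne fm fp 1 + I * laurentDegOne gm gp 1 =
      ((fm + fp : ℝ) : ℂ) + ((gm + gp : ℝ) : ℂ) * I := by
    rw [laurentDegOne_one, laurentDegOne_one, mul_comm]
  rw [thetaSum, hz]
  exact cos_arg_and_sin_arg_of_sq_add_sq_eq_one (by exact_mod_cast h)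

theorem cos_thetaDiff_and_sin_thetaDiff
    (h : laurentDegOne fm fp I * laurentDegOne fm fp I⁻¹ +
      laurentDegOne gm gp I * laurentDegOne gm gp I⁻¹ = 1) :
    Real.cos (thetaDiff (laurentDegOne fm fp) (laurentDegOne gm gp)) = fp - fm ∧
      Real.sin (thetaDiff (laurentDegOne fm fp) (laurentDegOne gm gp)) = gm - gp := by
  rw [laurentDegOne_mul_inv_I, laurentDegOne_mul_inv_I] at h
  have hz : laurentDegOne fm fp I - I * laurentDegOne gm gp I =
      ((gp - gm : ℝ) : ℂ) + ((fp - fm : ℝ) : ℂ) * I := by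
    rw [laurentDegOne_I, laurentDegOne_I]
    push_cast
    linear_combination ((gm : ℂ) - gp) * I_sq
  obtain ⟨hcos, hsin⟩ :=
    cos_arg_and_sin_arg_of_sq_add_sq_eq_one (x := gp - gm) (y := fp - fm) (by
      rw [add_comm]
      exact_mod_cast h)
  rw [thetaDiff, hz, Real.cos_sub_pi_div_two, Real.sin_sub_pi_div_two, hcos, hsin, neg_sub]
  exact ⟨rfl, rfl⟩

end

theorem wz_qsp_degree_one (fm fp gm gp : ℝ)
    (F : ℂ → ℂ) (G : ℂ → ℂ)
    (hF : ∀ w : ℂ, F w = (fm : ℂ) * w⁻¹ + (fp : ℂ) * w)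
    (hG : ∀ w : ℂ, G w = (gm : ℂ) * w⁻¹ + (gp : ℂ) * w)
    (hid : ∀ w : ℂ, ‖w‖ = 1 → F w * F w⁻¹ + G w * G w⁻¹ = 1) :
    letI θsum : ℝ := Complex.arg (F 1 + I * G 1)
    letI θdiff : ℝ := Complex.arg (F I - I * G I) - Real.pi / 2
    letI φ₀ : ℝ := (θsum + θdiff) / 2
    letI φ₁ : ℝ := (θsum - θdiff) / 2
    ∀ θ : ℝ,
      letI w : ℂ := Complex.exp (I * θ)
      !![(Real.cos φ₀ : ℂ), I * Real.sin φ₀; I * Real.sin φ₀, (Real.cos φ₀ : ℂ)] *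
        !![w, 0; 0, w⁻¹] *
        !![(Real.cos φ₁ : ℂ), I * Real.sin φ₁; I * Real.sin φ₁, (Real.cos φ₁ : ℂ)] =
      !![F w, I * G w; I * G w⁻¹, F w⁻¹] := by
  intro θ
  obtain rfl : F = laurentDegOne fm fp := funext hF
  obtain rfl : G = laurentDegOne gm gp := funext hG
  obtain ⟨hcα, hsα⟩ := cos_thetaSum_and_sin_thetaSum (hid 1 (by simp))
  obtain ⟨hcβ, hsβ⟩ := cos_thetaDiff_and_sin_thetaDiff (hid I (by simp))
  set α := thetaSum (laurentDegOne fm fp) (laurentDegOne gm gp)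
  set β := thetaDiff (laurentDegOne fm fp) (laurentDegOne gm gp)
  have hfm : (Real.cos α - Real.cos β) / 2 = fm := by linarith
  have hfp : (Real.cos α + Real.cos β) / 2 = fp := by linarith
  have hgm : (Real.sin α + Real.sin β) / 2 = gm := by linarith
  have hgp : (Real.sin α - Real.sin β) / 2 = gp := by linarith
  have key := sx_add_mul_wz_mul_sx_sub α β (exp (I * θ))
  rw [hfm, hfp, hgm, hgp] at key
  exact key
end
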